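/- Convergence of the kurtosis under the renormalized coupling: there exist δ > 0 and C > 0 such that for every real κ with 0 < |κ| < δ, the limit K(κ) := lim_{N→∞} m₄(N; κ/N) / (m₂(N; κ/N))² exists and satisfies |K(κ) − 3| ≤ C·|κ|³ (i.e. the kurtosis converges to 3 with vanishing first- and second-order corrections in κ). -/

import Mathlib

open Filter

/-- The discrete stochastic process with memory: binomial transfer probabilities
with coupling `ε`. -/
noncomputable def P (ε : ℝ) : ℕ → ℤ → ℝ
  | 0, x => if x = 0 then 1 else 0
  | n + 1, x =>
      P ε n (x + 1) * (1 / 2 - ((x : ℝ) + 1) * ε) +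
      P ε n (x - 1) * (1 / 2 + ((x : ℝ) - 1) * ε)

/-- The `k`-th moment with coupling `ε`: `m_k(n; ε) = Σ_{x ∈ ℤ} x^k · P(n, x; ε)`. -/
noncomputable def m (ε : ℝ) (k n : ℕ) : ℝ := ∑' x : ℤ, (x : ℝ) ^ k * P ε n x

/-!
Moments of `P` are computed from the recurrence by shifting the summation index: against a test function `g`,
one step maps `g` to `y ↦ g (y - 1) (1/2 - yε) + g (y + 1) (1/2 + yε)`. For `g = x²` and `g = x⁴`
this closes on the moments, `m₂ ↦ (1 + 4ε) m₂ + 1` and `m₄ ↦ (1 + 8ε) m₄ + (6 + 8ε) m₂ + 1`,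
so both moments are explicit in `(1 + 4ε)ⁿ` and `(1 + 8ε)ⁿ`. At `ε = κ/N` these powers tend to
`A = exp (4κ)` and `exp (8κ) = A²`, which gives `m₂/N → (A - 1)/(4κ)` and
`m₄/N² → 6 (A - 1)²/(32κ²)`: the kurtosis tends to exactly `3`.
-/

open Topology

lemma P_eq_zero_of_lt_abs (ε : ℝ) : ∀ (n : ℕ) (x : ℤ), (n : ℤ) < |x| → P ε n x = 0
  | 0, x, h => by
      have hx : x ≠ 0 := by rintro rfl; simp at h
      simp [P, hx]
  | n + 1, x, h => by
      have h₁ : (n : ℤ) < |x + 1| := by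
        have := abs_sub_abs_le_abs_sub x (-1)
        push_cast at h; simp only [abs_neg, abs_one, sub_neg_eq_add] at this; linarith
      have h₂ : (n : ℤ) < |x - 1| := by
        have := abs_sub_abs_le_abs_sub x 1
        push_cast at h; simp only [abs_one] at this; linarith
      simp [P, P_eq_zero_of_lt_abs ε n _ h₁, P_eq_zero_of_lt_abs ε n _ h₂]

lemma summable_mul_P (ε : ℝ) (n : ℕ) (g : ℤ → ℝ) : Summable fun x : ℤ => g x * P ε n x := by
  refine summable_of_ne_finset_zero (s := Finset.Icc (-(n : ℤ)) n) fun x hx => ?_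
  have hx' : (n : ℤ) < |x| := by
    rw [Finset.mem_Icc, not_and_or, not_le, not_le] at hx
    rw [lt_abs]; omega
  rw [P_eq_zero_of_lt_abs ε n x hx', mul_zero]

lemma tsum_mul_P_succ (ε : ℝ) (n : ℕ) (g : ℤ → ℝ) :
    ∑' x : ℤ, g x * P ε (n + 1) x =
      ∑' y : ℤ, (g (y - 1) * (1 / 2 - y * ε) + g (y + 1) * (1 / 2 + y * ε)) * P ε n y := by
  set f₁ : ℤ → ℝ := fun y => g (y - 1) * (1 / 2 - y * ε) * P ε n y
  set f₂ : ℤ → ℝ := fun y => g (y + 1) * (1 / 2 + y * ε) * P ε n y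
  have hf₁ : Summable f₁ := summable_mul_P ε n _
  have hf₂ : Summable f₂ := summable_mul_P ε n _
  have hshift₁ : ∑' x : ℤ, f₁ (x + 1) = ∑' y : ℤ, f₁ y := (Equiv.addRight 1).tsum_eq f₁
  have hshift₂ : ∑' x : ℤ, f₂ (x - 1) = ∑' y : ℤ, f₂ y := (Equiv.subRight 1).tsum_eq f₂
  calc ∑' x : ℤ, g x * P ε (n + 1) x
      = ∑' x : ℤ, (f₁ (x + 1) + f₂ (x - 1)) := by
        refine tsum_congr fun x => ?_
        simp only [P, f₁, f₂, add_sub_cancel_right, sub_add_cancel]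
        push_cast
        ring
    _ = ∑' x : ℤ, f₁ (x + 1) + ∑' x : ℤ, f₂ (x - 1) :=
        (hf₁.comp_injective (add_left_injective 1)).tsum_add
          (hf₂.comp_injective (sub_left_injective (b := 1)))
    _ = ∑' y : ℤ, (f₁ y + f₂ y) := by rw [hshift₁, hshift₂, hf₁.tsum_add hf₂]
    _ = _ := tsum_congr fun y => by simp only [f₁, f₂]; ring

lemma m_at_time_zero (ε : ℝ) (k : ℕ) : m ε k 0 = if k = 0 then 1 else 0 := by
  rw [m, tsum_eq_single 0 fun x hx => by simp [P, hx]]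
  rcases eq_or_ne k 0 with rfl | hk <;> simp [P, *]

lemma m_zero_eq_one (ε : ℝ) (n : ℕ) : m ε 0 n = 1 := by
  induction n with
  | zero => simp [m_at_time_zero]
  | succ n ih =>
    rw [← ih, m, m, tsum_mul_P_succ]
    exact tsum_congr fun y => by push_cast; ring

lemma m_two_succ (ε : ℝ) (n : ℕ) : m ε 2 (n + 1) = (1 + 4 * ε) * m ε 2 n + 1 := by
  have hS₂ := (summable_mul_P ε n fun y => (y : ℝ) ^ 2).mul_left (1 + 4 * ε)
  have hS₀ := summable_mul_P ε n fun y => (y : ℝ) ^ 0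
  calc m ε 2 (n + 1)
      = ∑' y : ℤ, ((1 + 4 * ε) * ((y : ℝ) ^ 2 * P ε n y) + (y : ℝ) ^ 0 * P ε n y) := by
        rw [m, tsum_mul_P_succ]
        exact tsum_congr fun y => by push_cast; ring
    _ = (1 + 4 * ε) * m ε 2 n + m ε 0 n := by rw [hS₂.tsum_add hS₀, tsum_mul_left, m, m]
    _ = _ := by rw [m_zero_eq_one]

lemma m_four_succ (ε : ℝ) (n : ℕ) :
    m ε 4 (n + 1) = (1 + 8 * ε) * m ε 4 n + (6 + 8 * ε) * m ε 2 n + 1 := by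
  have hS₄ := (summable_mul_P ε n fun y => (y : ℝ) ^ 4).mul_left (1 + 8 * ε)
  have hS₂ := (summable_mul_P ε n fun y => (y : ℝ) ^ 2).mul_left (6 + 8 * ε)
  have hS₀ := summable_mul_P ε n fun y => (y : ℝ) ^ 0
  calc m ε 4 (n + 1)
      = ∑' y : ℤ, ((1 + 8 * ε) * ((y : ℝ) ^ 4 * P ε n y)
          + (6 + 8 * ε) * ((y : ℝ) ^ 2 * P ε n y) + (y : ℝ) ^ 0 * P ε n y) := by
        rw [m, tsum_mul_P_succ]
        exact tsum_congr fun y => by push_cast; ring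
    _ = (1 + 8 * ε) * m ε 4 n + (6 + 8 * ε) * m ε 2 n + m ε 0 n := by
        rw [(hS₄.add hS₂).tsum_add hS₀, hS₄.tsum_add hS₂, tsum_mul_left, tsum_mul_left, m, m, m]
    _ = _ := by rw [m_zero_eq_one]

lemma m_two_eq {ε : ℝ} (hε : ε ≠ 0) (n : ℕ) : m ε 2 n = ((1 + 4 * ε) ^ n - 1) / (4 * ε) := by
  induction n with
  | zero => simp [m_at_time_zero]
  | succ n ih => rw [m_two_succ, ih]; field_simp; ring

lemma m_four_eq {ε : ℝ} (hε : ε ≠ 0) (n : ℕ) :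
    m ε 4 n = (6 + 8 * ε) * ((1 + 8 * ε) ^ n - 2 * (1 + 4 * ε) ^ n + 1) / (32 * ε ^ 2)
      + ((1 + 8 * ε) ^ n - 1) / (8 * ε) := by
  induction n with
  | zero => norm_num [m_at_time_zero]
  | succ n ih => rw [m_four_succ, ih, m_two_eq hε]; field_simp; ring

section Renormalized

variable {κ : ℝ}

lemma tendsto_m_two_div_self (hκ : κ ≠ 0) :
    Tendsto (fun N : ℕ => m (κ / N) 2 N / N) atTop (𝓝 ((Real.exp (4 * κ) - 1) / (4 * κ))) := by
  have hlim := ((Real.tendsto_one_add_div_pow_exp (4 * κ)).sub_const 1).div_const (4 * κ)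
  refine hlim.congr' ?_
  filter_upwards [eventually_ne_atTop 0] with N hN
  have hN' : (N : ℝ) ≠ 0 := Nat.cast_ne_zero.mpr hN
  rw [m_two_eq (div_ne_zero hκ hN')]
  field_simp

lemma tendsto_m_four_div_sq (hκ : κ ≠ 0) :
    Tendsto (fun N : ℕ => m (κ / N) 4 N / (N : ℝ) ^ 2) atTop
      (𝓝 (3 * ((Real.exp (4 * κ) - 1) / (4 * κ)) ^ 2)) := by
  have hA := Real.tendsto_one_add_div_pow_exp (4 * κ)
  have hB := Real.tendsto_one_add_div_pow_exp (8 * κ)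
  have hinv : Tendsto (fun N : ℕ => ((N : ℝ))⁻¹) atTop (𝓝 0) :=
    tendsto_inv_atTop_zero.comp tendsto_natCast_atTop_atTop
  have hlim := (((tendsto_const_nhds (x := (6 : ℝ))).add (hinv.const_mul (8 * κ))).mul
      (((hB.sub (hA.const_mul 2)).add_const 1).div_const (32 * κ ^ 2))).add
      (((hB.sub_const 1).div_const (8 * κ)).mul hinv)
  have hexp : Real.exp (8 * κ) = Real.exp (4 * κ) ^ 2 := by
    rw [← Real.exp_nat_mul]; ring_nf
  simp only [mul_zero, add_zero] at hlim
  rw [hexp] at hlim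
  convert hlim using 1
  · funext N
    rcases eq_or_ne N 0 with rfl | hN
    · norm_num [m_at_time_zero]
    have hN' : (N : ℝ) ≠ 0 := Nat.cast_ne_zero.mpr hN
    rw [m_four_eq (div_ne_zero hκ hN')]
    field_simp
  · congr 1
    field_simp
    ring

end Renormalized

/-- convergence of the kurtosis under the renormalized coupling
`ε = κ/N`: there exist `δ > 0` and `C > 0` such that for `0 < |κ| < δ`, the limit
`K(κ) = lim_{N→∞} m₄(N; κ/N)/(m₂(N; κ/N))²` exists and `|K(κ) − 3| ≤ C·|κ|³`. -/
theorem kurtosis_converges_to_three :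
    ∃ δ > (0 : ℝ), ∃ C > (0 : ℝ), ∀ κ : ℝ, 0 < |κ| → |κ| < δ →
      ∃ K : ℝ,
        Tendsto (fun N : ℕ => m (κ / N) 4 N / (m (κ / N) 2 N) ^ 2) atTop (nhds K) ∧
        |K - 3| ≤ C * |κ| ^ 3 := by
  refine ⟨1, one_pos, 1, one_pos, fun κ hκ _ => ⟨3, ?_, by simp⟩⟩
  have hκ0 : κ ≠ 0 := abs_pos.mp hκ
  have hL : (Real.exp (4 * κ) - 1) / (4 * κ) ≠ 0 :=
    div_ne_zero (sub_ne_zero.mpr (by simpa using hκ0)) (by simpa using hκ0)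
  have hlim := (tendsto_m_four_div_sq hκ0).div ((tendsto_m_two_div_self hκ0).pow 2)
    (pow_ne_zero 2 hL)
  rw [mul_div_assoc, div_self (pow_ne_zero 2 hL), mul_one] at hlim
  refine hlim.congr' ?_
  filter_upwards [eventually_ne_atTop 0] with N hN
  simp only [Pi.div_apply, div_pow]
  exact div_div_div_cancel_right₀ (pow_ne_zero 2 (Nat.cast_ne_zero.mpr hN)) _ _
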